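/- arXiv:1803.07655 — 2 statements merged into one kernel-verified Lean document; each statement's English description precedes it below -/
import Mathlib

section
/- For any N ≥ 2 and 1 ≤ L ≤ N−1, the maximum over s ∈ {1,...,N} of (1/min(s,L))·(s − (s/⌊N/s⌋)·(1/N)) is attained at s = N and equals (N−1)/L. -/
/-- For `N ≥ 2` and `1 ≤ L ≤ N - 1`, the cut-set expression
`(1/min(s,L)) (s - (s/⌊N/s⌋)(1/N))` over `s ∈ {1,…,N}` is maximized at
`s = N`, where it equals `(N-1)/L`. -/
theorem stmt14 (N L : ℕ) (hN : 2 ≤ N) (hL1 : 1 ≤ L) (hL : L ≤ N - 1) :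
    (∀ s : ℕ, 1 ≤ s → s ≤ N →
      (1 / (min s L : ℚ)) *
        ((s : ℚ) - ((s : ℚ) / ((N / s : ℕ) : ℚ)) * (1 / N))
      ≤ ((N : ℚ) - 1) / L) ∧
    (1 / (min N L : ℚ)) *
        ((N : ℚ) - ((N : ℚ) / ((N / N : ℕ) : ℚ)) * (1 / N))
      = ((N : ℚ) - 1) / L := by
  have hNq : (2:ℚ) ≤ N := by exact_mod_cast hN
  have hLq : (1:ℚ) ≤ L := by exact_mod_cast hL1
  have hLN : (L:ℚ) ≤ (N:ℚ) - 1 := by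
    have h1 : (L:ℚ) ≤ ((N-1:ℕ):ℚ) := by exact_mod_cast hL
    rwa [Nat.cast_sub (by omega), Nat.cast_one] at h1
  constructor
  · intro s hs1 hsN
    have hm1 : 1 ≤ N / s := (Nat.one_le_div_iff (by omega)).mpr hsN
    have hms : (N / s) * s ≤ N := Nat.div_mul_le_self N s
    have hmq : (1:ℚ) ≤ ((N/s:ℕ):ℚ) := by exact_mod_cast hm1
    have hsq : (1:ℚ) ≤ (s:ℚ) := by exact_mod_cast hs1
    have hsN' : (s:ℚ) ≤ N := by exact_mod_cast hsN
    have hmsq : ((N/s:ℕ):ℚ) * s ≤ N := by exact_mod_cast hms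
    set m : ℚ := ((N/s:ℕ):ℚ) with hmdef
    have hm0 : (0:ℚ) < m := by linarith
    have hs0 : (0:ℚ) < s := by linarith
    have hN0 : (0:ℚ) < N := by linarith
    have hL0 : (0:ℚ) < L := by linarith
    rcases le_total s L with h | h
    · rw [min_eq_left (show (s:ℚ) ≤ L by exact_mod_cast h)]
      have key : (1 / (s:ℚ)) * ((s:ℚ) - ((s:ℚ)/m) * (1/N)) = 1 - 1/(m*(N:ℚ)) := by
        field_simp
      rw [key]
      have h1 : (1:ℚ) ≤ ((N:ℚ)-1)/L := (le_div_iff₀ hL0).mpr (by linarith)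
      have h2 : (0:ℚ) < 1/(m*(N:ℚ)) := by positivity
      linarith
    · rw [min_eq_right (show (L:ℚ) ≤ s by exact_mod_cast h), one_div_mul_eq_div, div_le_div_iff₀ hL0 hL0]
      have h3 : (s:ℚ)*s/((N:ℚ)*N) ≤ (s:ℚ)/m * (1/N) := by
        rw [div_mul_div_comm, div_le_div_iff₀ (by positivity) (by positivity)]
        nlinarith [mul_le_mul_of_nonneg_left hmsq (by positivity : (0:ℚ) ≤ (s:ℚ)*N)]
      have h4 : (s:ℚ) - (s:ℚ)*s/((N:ℚ)*N) ≤ (N:ℚ) - 1 := by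
        have e : (s:ℚ)*s/((N:ℚ)*N) * ((N:ℚ)*N) = (s:ℚ)*s :=
          div_mul_cancel₀ _ (by positivity)
        nlinarith [mul_nonneg (sub_nonneg.mpr hsN')
          (show (0:ℚ) ≤ (N:ℚ)*N - N - s by nlinarith), e,
          mul_pos hN0 hN0]
      nlinarith
  · have h1 : min (N:ℚ) (L:ℚ) = L := min_eq_right (by exact_mod_cast (by omega : L ≤ N))
    rw [h1, Nat.div_self (by omega)]
    have hN0 : (0:ℚ) < N := by linarith
    have hL0 : (0:ℚ) < L := by linarith
    field_simp
    simp
end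

section
/- Let G be an additive abelian group and let d be a permutation of {1,...,N}. Suppose user j knows S_j = Σ_{n=1}^N W_n^j and, for each i ≠ j, knows W_{d_i}^j and W_{d_j}^i. Then user j can reconstruct the entire file W_{d_j} = (W_{d_j}^1, ..., W_{d_j}^N). -/
/-!
The only subfile of `W (d j)` that user `j` does not know directly is the diagonal one,
`W (d j) j`. Since `d` is a permutation, `S_j = ∑ n, W n j = ∑ i, W (d i) j`, and every summand
with `i ≠ j` is known, so `W (d j) j` is `S_j` minus the known summands.
-/

section Decoding

variable {G ι : Type*} [AddCommGroup G] [Fintype ι] [DecidableEq ι]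

theorem Equiv.Perm.sum_sub_sum_subtype_ne_comp (d : Equiv.Perm ι) (f : ι → G) (j : ι) :
    ∑ n, f n - ∑ i : {i // i ≠ j}, f (d i) = f (d j) := by
  rw [← Equiv.sum_comp d f, Fintype.sum_eq_add_sum_subtype_ne _ j, add_sub_cancel_right]

/-- The decoder of user `j`: `S` is the coded cache, `a i = W (d i) j` and `b i = W (d j) i`. -/
def decodeFile (j : ι) (S : G) (a b : {i // i ≠ j} → G) : ι → G :=
  fun i => if h : i = j then S - ∑ i', a i' else b ⟨i, h⟩

theorem decodeFile_eq (d : Equiv.Perm ι) (j : ι) (W : ι → ι → G) :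
    decodeFile j (∑ n, W n j) (fun i => W (d i.1) j) (fun i => W (d j) i.1) = W (d j) := by
  funext i
  by_cases h : i = j
  · subst h
    simp only [decodeFile]
    exact d.sum_sub_sum_subtype_ne_comp (W · i) i
  · simp only [decodeFile, dif_neg h]

end Decoding

/-- User `j`, knowing `S_j = ∑ n, W n j`, the subfiles `W (d i) j` for `i ≠ j`,
and the subfiles `W (d j) i` for `i ≠ j`, can reconstruct the whole file
`W (d j)`: there is a decoder depending only on this knowledge. -/
theorem stmt16 {G : Type*} [AddCommGroup G] (N : ℕ)
    (d : Equiv.Perm (Fin N)) (j : Fin N) :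
    ∃ f : G → ({i : Fin N // i ≠ j} → G) → ({i : Fin N // i ≠ j} → G) →
        (Fin N → G),
      ∀ W : Fin N → Fin N → G,
        f (∑ n, W n j) (fun i => W (d i.1) j) (fun i => W (d j) i.1)
          = fun i => W (d j) i :=
  ⟨decodeFile j, decodeFile_eq d j⟩
end
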